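/- arXiv:1701.01862 — 2 statements merged into one kernel-verified Lean document; each statement's English description precedes it below -/
import Mathlib

section
/- An open continuous surjection between compact Hausdorff spaces induces a continuous map between hyperspaces of subcontinua sending K to f(K), and if f is additionally monotone then H ↦ f⁻¹(H) gives a continuous map C(M) → C(X) with f(f⁻¹(H)) = H. -/
/-!
Continuity is checked on the subbasic Vietoris sets. For `K ↦ f(K)` they pull back to
subbasic sets of `C(X)`, by continuity of `f`. For `H ↦ f⁻¹(H)`, the condition `f⁻¹(H) ⊆ U`
means `H` misses the closed set `f(Uᶜ)`, and `f⁻¹(H)` meets `U` iff `H` meets the open set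
`f(U)`. A closed surjection is a quotient map, so with connected fibres it pulls subcontinua
back to subcontinua.
-/

/-- The hyperspace of nonempty subcontinua of `X`. -/
abbrev Subcontinua (X : Type*) [TopologicalSpace X] : Type _ :=
  {K : Set X // IsCompact K ∧ IsConnected K}

/-- The Vietoris topology on the hyperspace of subcontinua, generated by the sets
`{K : K ⊆ U}` and `{K : K ∩ U ≠ ∅}` for `U` open. -/
def vietorisTopology (X : Type*) [TopologicalSpace X] : TopologicalSpace (Subcontinua X) :=
  TopologicalSpace.generateFrom
    ({S | ∃ U : Set X, IsOpen U ∧ S = {K : Subcontinua X | (K : Set X) ⊆ U}} ∪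
     {S | ∃ U : Set X, IsOpen U ∧ S = {K : Subcontinua X | ((K : Set X) ∩ U).Nonempty}})

open Set

lemma Set.preimage_subset_iff_subset_compl_image {α β : Type*} {f : α → β} {s : Set β}
    {U : Set α} : f ⁻¹' s ⊆ U ↔ s ⊆ (f '' Uᶜ)ᶜ := by
  rw [subset_compl_comm, image_subset_iff, preimage_compl, compl_subset_compl]

lemma Set.preimage_inter_nonempty_iff {α β : Type*} {f : α → β} {s : Set β} {U : Set α} :
    (f ⁻¹' s ∩ U).Nonempty ↔ (s ∩ f '' U).Nonempty := by
  rw [inter_comm, ← image_inter_nonempty_iff, inter_comm]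

namespace Subcontinua

attribute [local instance] vietorisTopology

variable {X Y Z : Type*} [TopologicalSpace X] [TopologicalSpace Y] [TopologicalSpace Z]

lemma isOpen_setOf_subset {U : Set X} (hU : IsOpen U) :
    IsOpen {K : Subcontinua X | (K : Set X) ⊆ U} :=
  TopologicalSpace.isOpen_generateFrom_of_mem (Or.inl ⟨U, hU, rfl⟩)

lemma isOpen_setOf_inter_nonempty {U : Set X} (hU : IsOpen U) :
    IsOpen {K : Subcontinua X | ((K : Set X) ∩ U).Nonempty} :=
  TopologicalSpace.isOpen_generateFrom_of_mem (Or.inr ⟨U, hU, rfl⟩)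

lemma continuous_of_isOpen_setOf {g : Z → Subcontinua X}
    (h_subset : ∀ U : Set X, IsOpen U → IsOpen {z | (g z : Set X) ⊆ U})
    (h_inter : ∀ U : Set X, IsOpen U → IsOpen {z | ((g z : Set X) ∩ U).Nonempty}) :
    Continuous g := by
  refine continuous_generateFrom_iff.2 ?_
  rintro S (⟨U, hU, rfl⟩ | ⟨U, hU, rfl⟩)
  exacts [h_subset U hU, h_inter U hU]

variable {f : X → Y}

def image (hf : Continuous f) (K : Subcontinua X) : Subcontinua Y :=
  ⟨f '' K, K.2.1.image hf, K.2.2.image f hf.continuousOn⟩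

lemma continuous_image (hf : Continuous f) : Continuous (image hf) :=
  continuous_of_isOpen_setOf
    (fun U hU => by simpa only [image, image_subset_iff] using isOpen_setOf_subset (hU.preimage hf))
    (fun U hU => by
      simpa only [image, image_inter_nonempty_iff] using
        isOpen_setOf_inter_nonempty (hU.preimage hf))

variable [CompactSpace X] [T2Space Y]

def preimage (hf : Continuous f) (hfc : IsClosedMap f) (hfib : ∀ y, IsConnected (f ⁻¹' {y}))
    (H : Subcontinua Y) : Subcontinua X :=
  ⟨f ⁻¹' H, (H.2.1.isClosed.preimage hf).isCompact,
    (hfc.isQuotientMap hf fun y => (hfib y).nonempty).isCoinducing.isConnected_preimage_of_isClosed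
      hfib H.2.1.isClosed H.2.2⟩

lemma continuous_preimage (hf : Continuous f) (hfc : IsClosedMap f) (hfo : IsOpenMap f)
    (hfib : ∀ y, IsConnected (f ⁻¹' {y})) : Continuous (preimage hf hfc hfib) :=
  continuous_of_isOpen_setOf
    (fun U hU => by
      simpa only [preimage, preimage_subset_iff_subset_compl_image] using
        isOpen_setOf_subset (hfc _ hU.isClosed_compl).isOpen_compl)
    (fun U hU => by
      simpa only [preimage, preimage_inter_nonempty_iff] using
        isOpen_setOf_inter_nonempty (hfo _ hU))

end Subcontinua

theorem stmt_18_general {X M : Type*} [TopologicalSpace X] [TopologicalSpace M]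
    [CompactSpace X] [T2Space M]
    (f : X → M) (hf : Continuous f) (hfo : IsOpenMap f) :
    letI : TopologicalSpace (Subcontinua X) := vietorisTopology X
    letI : TopologicalSpace (Subcontinua M) := vietorisTopology M
    (∃ Φ : Subcontinua X → Subcontinua M,
        Continuous Φ ∧ ∀ K : Subcontinua X, (Φ K : Set M) = f '' (K : Set X)) ∧
    ((∀ p : M, IsConnected (f ⁻¹' {p})) → IsClosedMap f →
      ∃ Ψ : Subcontinua M → Subcontinua X,
        Continuous Ψ ∧ (∀ H : Subcontinua M, (Ψ H : Set X) = f ⁻¹' (H : Set M)) ∧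
        ∀ H : Subcontinua M, f '' (f ⁻¹' (H : Set M)) = (H : Set M)) :=
  ⟨⟨Subcontinua.image hf, Subcontinua.continuous_image hf, fun _ => rfl⟩,
    fun hfib hfc => ⟨Subcontinua.preimage hf hfc hfib,
      Subcontinua.continuous_preimage hf hfc hfo hfib, fun _ => rfl,
      fun _ => image_preimage_eq _ fun y => (hfib y).nonempty⟩⟩

/-- An open continuous surjection `f : X → M` between compact Hausdorff
spaces induces a continuous map of hyperspaces `C(X) → C(M)`, `K ↦ f(K)`; and if `f`
is moreover monotone and closed then `H ↦ f⁻¹(H)` is a well-defined continuous map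
`C(M) → C(X)` which is a right inverse of the former. -/
theorem stmt_18 {X M : Type*} [TopologicalSpace X] [TopologicalSpace M]
    [CompactSpace X] [T2Space X] [CompactSpace M] [T2Space M]
    (f : X → M) (hf : Continuous f) (hfs : Function.Surjective f) (hfo : IsOpenMap f) :
    letI : TopologicalSpace (Subcontinua X) := vietorisTopology X
    letI : TopologicalSpace (Subcontinua M) := vietorisTopology M
    (∃ Φ : Subcontinua X → Subcontinua M,
        Continuous Φ ∧ ∀ K : Subcontinua X, (Φ K : Set M) = f '' (K : Set X)) ∧
    ((∀ p : M, IsConnected (f ⁻¹' {p})) → IsClosedMap f →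
      ∃ Ψ : Subcontinua M → Subcontinua X,
        Continuous Ψ ∧ (∀ H : Subcontinua M, (Ψ H : Set X) = f ⁻¹' (H : Set M)) ∧
        ∀ H : Subcontinua M, f '' (f ⁻¹' (H : Set M)) = (H : Set M)) :=
  stmt_18_general f hf hfo
end

section
/- For an ω₁-indexed inverse limit of compact Hausdorff spaces with surjective bonding maps, every nondegenerate closed subset H has a least ordinal α_H such that π_{α_H}(H) is nondegenerate, and the set {K ∈ C(X) : α_K ≥ α} is closed in the Vietoris topology for each fixed α. -/
/-- The set of countable ordinals, i.e. the ordinals below ω₁. -/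
abbrev Omega1 : Type 1 := {o : Ordinal.{0} // o < (Cardinal.aleph 1).ord}

/-- The inverse limit of an inverse system, as a subspace of the product. -/
def InvLimit {I : Type*} [Preorder I] (X : I → Type*) [∀ i, TopologicalSpace (X i)]
    (f : ∀ ⦃a b : I⦄, a ≤ b → X b → X a) : Set (∀ i, X i) :=
  {x | ∀ ⦃a b : I⦄ (h : a ≤ b), f h (x b) = x a}

/-- For an `ω₁`-indexed inverse limit of compact Hausdorff spaces with
continuous surjective bonding maps: (a) every nondegenerate closed subset `H` has a
least ordinal `α_H` such that the projection `π_{α_H}(H)` is nondegenerate; and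
(b) for each fixed `α`, the collection of subcontinua `K` all of whose projections to
coordinates `β < α` are degenerate (i.e. nondegenerate `K` with `α_K ≥ α`, together
with the singletons) is closed in the Vietoris topology on the hyperspace. -/
theorem stmt_19 (X : Omega1 → Type*) [∀ i, TopologicalSpace (X i)]
    [∀ i, CompactSpace (X i)] [∀ i, T2Space (X i)] [∀ i, Nonempty (X i)]
    (f : ∀ ⦃a b : Omega1⦄, a ≤ b → X b → X a)
    (hf : ∀ ⦃a b : Omega1⦄ (h : a ≤ b), Continuous (f h))
    (hfsurj : ∀ ⦃a b : Omega1⦄ (h : a ≤ b), Function.Surjective (f h))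
    (hfid : ∀ a : Omega1, f (le_refl a) = id)
    (hfcomp : ∀ ⦃a b c : Omega1⦄ (hab : a ≤ b) (hbc : b ≤ c),
      f hab ∘ f hbc = f (hab.trans hbc)) :
    (∀ H : Set (InvLimit X f), IsClosed H → H.Nonempty → ¬ H.Subsingleton →
      ∃ α : Omega1,
        ¬ ((fun x : InvLimit X f => (x : ∀ i, X i) α) '' H).Subsingleton ∧
        ∀ β : Omega1,
          ¬ ((fun x : InvLimit X f => (x : ∀ i, X i) β) '' H).Subsingleton → α ≤ β) ∧
    (∀ α : Omega1,
      letI : TopologicalSpace (Subcontinua (InvLimit X f)) :=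
        vietorisTopology (InvLimit X f)
      IsClosed {K : Subcontinua (InvLimit X f) |
        ∀ β : Omega1, β < α →
          ((fun x : InvLimit X f => (x : ∀ i, X i) β) '' (K : Set (InvLimit X f))).Subsingleton}) := by

  constructor
  · intro H _ _ hHns
    rw [Set.not_subsingleton_iff] at hHns
    obtain ⟨x, hx, y, hy, hxy⟩ := hHns
    have hne : ∃ β : Omega1, (x : ∀ i, X i) β ≠ (y : ∀ i, X i) β := by
      by_contra h
      push_neg at h
      exact hxy (Subtype.ext (funext fun β => h β))
    set S : Set Ordinal.{0} := {o | ∃ h : o < (Cardinal.aleph 1).ord,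
      ¬ ((fun x : InvLimit X f => (x : ∀ i, X i) ⟨o, h⟩) '' H).Subsingleton} with hS
    have hSne : S.Nonempty := by
      obtain ⟨β, hβ⟩ := hne
      refine ⟨β.1, β.2, fun hsub => hβ ?_⟩
      exact hsub ⟨x, hx, rfl⟩ ⟨y, hy, rfl⟩
    obtain ⟨o, ⟨ho, hnd⟩, hmin⟩ := Ordinal.lt_wf.has_min S hSne
    refine ⟨⟨o, ho⟩, hnd, fun β hβ => ?_⟩
    have : β.1 ∈ S := ⟨β.2, hβ⟩
    exact not_lt.mp (hmin β.1 this)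
  · intro α
    letI : TopologicalSpace (Subcontinua (InvLimit X f)) := vietorisTopology (InvLimit X f)
    rw [← isOpen_compl_iff, isOpen_iff_forall_mem_open]
    intro K hK
    simp only [Set.mem_compl_iff, Set.mem_setOf_eq, not_forall] at hK
    obtain ⟨β, hβα, hns⟩ := hK
    rw [Set.not_subsingleton_iff] at hns
    obtain ⟨a, ha, b, hb, hab⟩ := hns
    obtain ⟨x, hx, rfl⟩ := ha
    obtain ⟨y, hy, rfl⟩ := hb
    obtain ⟨U, V, hU, hV, haU, hbV, hUV⟩ := t2_separation hab
    have hcont : Continuous (fun z : InvLimit X f => (z : ∀ i, X i) β) :=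
      (continuous_apply β).comp continuous_subtype_val
    refine ⟨{K' : Subcontinua (InvLimit X f) |
        ((K' : Set (InvLimit X f)) ∩ ((fun z : InvLimit X f => (z : ∀ i, X i) β) ⁻¹' U)).Nonempty} ∩
      {K' : Subcontinua (InvLimit X f) |
        ((K' : Set (InvLimit X f)) ∩ ((fun z : InvLimit X f => (z : ∀ i, X i) β) ⁻¹' V)).Nonempty},
      ?_, ?_, ?_⟩
    · rintro K' ⟨⟨p, hpK, hpU⟩, ⟨q, hqK, hqV⟩⟩
      intro habs
      refine absurd (habs β hβα ⟨p, hpK, rfl⟩ ⟨q, hqK, rfl⟩) ?_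
      intro heq
      exact (hUV.ne_of_mem hpU hqV) heq
    · exact TopologicalSpace.GenerateOpen.inter _ _
        (TopologicalSpace.GenerateOpen.basic _ (Or.inr ⟨_, hU.preimage hcont, rfl⟩))
        (TopologicalSpace.GenerateOpen.basic _ (Or.inr ⟨_, hV.preimage hcont, rfl⟩))
    · exact ⟨⟨x, hx, haU⟩, ⟨y, hy, hbV⟩⟩
end
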